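/- arXiv:1802.10563 — 5 statements merged into one kernel-verified Lean document; each statement's English description precedes it below -/
import Mathlib

section
/- Let N be a norm on ℝ² whose restriction to ℝ² \ {0} is of class C¹. Then the Gauss map G : ∂B_N(0,1) → S¹ is surjective. -/
open Set Metric
open scoped RealInnerProductSpace

/-!
Fix `v` on the unit circle and compare the linear form `⟪v, ·⟫` with `N`. The ratio `⟪v, x⟫ / N x`
is invariant under positive scaling and continuous on the Euclidean unit circle, so it attains a
maximum `μ > 0` at a point `x₀` which may be rescaled to satisfy `N x₀ = 1`. Then `μ N - ⟪v, ·⟫` is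
nonnegative and vanishes at `x₀`, so its derivative at `x₀` is zero: `μ ∇N(x₀) = v`, and
normalising gives `G(x₀) = v`.
-/

theorem pos_of_subadditive_of_abs_homogeneous {E : Type*} [AddCommGroup E] [Module ℝ E]
    {N : E → ℝ} (hN_add : ∀ x y, N (x + y) ≤ N x + N y)
    (hN_smul : ∀ (c : ℝ) x, N (c • x) = |c| * N x) (hN_zero : ∀ x, N x = 0 → x = 0)
    {x : E} (hx : x ≠ 0) : 0 < N x := by
  have h0 : N 0 = 0 := by simpa using hN_smul 0 0
  have hneg : N (-x) = N x := by simpa using hN_smul (-1) x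
  have hnonneg : 0 ≤ N x := by linarith [h0 ▸ add_neg_cancel x ▸ hN_add x (-x)]
  exact hnonneg.lt_of_ne fun h => hx (hN_zero x h.symm)

theorem exists_eq_one_forall_le_mul {E : Type*} [NormedAddCommGroup E] [NormedSpace ℝ E]
    [ProperSpace E] [Nontrivial E] {N : E → ℝ} (hcont : ContinuousOn N {0}ᶜ)
    (hpos : ∀ x ≠ 0, 0 < N x) (hhom : ∀ (c : ℝ) x, 0 < c → N (c • x) = c * N x)
    (φ : E →L[ℝ] ℝ) : ∃ x₀, N x₀ = 1 ∧ ∀ x, φ x ≤ φ x₀ * N x := by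
  have hratio : ∀ (c : ℝ) x, 0 < c → φ (c • x) / N (c • x) = φ x / N x := by
    intro c x hc
    rw [map_smul, hhom c x hc, smul_eq_mul, mul_div_mul_left _ _ hc.ne']
  have hsphere : sphere (0 : E) 1 ⊆ {0}ᶜ := fun x hx => by
    simp [ne_zero_of_mem_unit_sphere ⟨x, hx⟩]
  obtain ⟨u, hu, hmax⟩ := (isCompact_sphere (0 : E) 1).exists_isMaxOn
    (NormedSpace.sphere_nonempty.2 zero_le_one)
    (φ.continuous.continuousOn.div (hcont.mono hsphere) fun x hx => (hpos x (hsphere hx)).ne')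
  have hu0 : u ≠ 0 := ne_zero_of_mem_unit_sphere ⟨u, hu⟩
  refine ⟨(N u)⁻¹ • u, ?_, fun x => ?_⟩
  · rw [hhom _ _ (inv_pos.2 (hpos u hu0)), inv_mul_cancel₀ (hpos u hu0).ne']
  rcases eq_or_ne x 0 with rfl | hx
  · have h0 : N 0 = 0 := by
      have h := hhom 2 (0 : E) two_pos
      rw [smul_zero] at h
      linarith
    simp [h0]
  have hxu : φ (‖x‖⁻¹ • x) / N (‖x‖⁻¹ • x) ≤ φ u / N u :=
    hmax (by simp [norm_smul, hx])
  rw [hratio _ _ (inv_pos.2 (norm_pos_iff.2 hx)), div_le_iff₀ (hpos x hx)] at hxu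
  rwa [map_smul, smul_eq_mul, ← div_eq_inv_mul]

theorem HasGradientAt.smul_eq_of_forall_inner_le_mul {F : Type*} [NormedAddCommGroup F]
    [InnerProductSpace ℝ F] [CompleteSpace F] {N : F → ℝ} {g v x₀ : F} {μ : ℝ}
    (hN : HasGradientAt N g x₀) (hle : ∀ x, ⟪v, x⟫ ≤ μ * N x) (heq : ⟪v, x₀⟫ = μ * N x₀) :
    μ • g = v := by
  have hmin : IsLocalMin (fun x => μ * N x - ⟪v, x⟫) x₀ :=
    Filter.Eventually.of_forall fun x => by linarith [hle x]
  have hderiv := hmin.hasFDerivAt_eq_zero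
    ((hN.hasFDerivAt.const_mul μ).sub (innerSL ℝ v).hasFDerivAt)
  apply (InnerProductSpace.toDual ℝ F).injective
  ext y
  simpa [sub_eq_zero, real_inner_smul_left] using congr($hderiv y)

/-- for a norm `N` on ℝ² of class `C¹` away from `0`, the Gauss map
`G : ∂B_N(0,1) → S¹`, `G x = ∇N(x)/‖∇N(x)‖`, is surjective. -/
theorem gauss_map_surjective
    (N : EuclideanSpace ℝ (Fin 2) → ℝ)
    (hN_add : ∀ x y : EuclideanSpace ℝ (Fin 2), N (x + y) ≤ N x + N y)
    (hN_smul : ∀ (c : ℝ) (x : EuclideanSpace ℝ (Fin 2)), N (c • x) = |c| * N x)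
    (hN_zero : ∀ x : EuclideanSpace ℝ (Fin 2), N x = 0 → x = 0)
    (hN_C1 : ContDiffOn ℝ 1 N ({0}ᶜ : Set (EuclideanSpace ℝ (Fin 2)))) :
    ∀ v ∈ sphere (0 : EuclideanSpace ℝ (Fin 2)) 1,
      ∃ x : EuclideanSpace ℝ (Fin 2), N x = 1 ∧
        ‖gradient N x‖⁻¹ • gradient N x = v := by
  intro v hv
  have hv1 : ‖v‖ = 1 := mem_sphere_zero_iff_norm.1 hv
  have hv0 : v ≠ 0 := ne_zero_of_mem_unit_sphere ⟨v, hv⟩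
  have hpos : ∀ x ≠ 0, 0 < N x := fun x =>
    pos_of_subadditive_of_abs_homogeneous hN_add hN_smul hN_zero
  obtain ⟨x₀, hx₀, hsupp⟩ := exists_eq_one_forall_le_mul hN_C1.continuousOn hpos
    (fun c x hc => by rw [hN_smul, abs_of_pos hc]) (innerSL ℝ v)
  simp only [innerSL_apply_apply] at hsupp
  have hx₀ne : x₀ ≠ 0 := by
    rintro rfl
    simpa [hx₀] using hN_smul 0 0
  have hgrad : HasGradientAt N (gradient N x₀) x₀ :=
    ((hN_C1.differentiableOn one_ne_zero).differentiableAt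
      (isOpen_compl_singleton.mem_nhds hx₀ne)).hasGradientAt
  have hμ : 0 < ⟪v, x₀⟫ := by
    have h := hsupp v
    rw [real_inner_self_eq_norm_sq, hv1] at h
    exact pos_of_mul_pos_left (by linarith) (hpos v hv0).le
  refine ⟨x₀, hx₀, ?_⟩
  have hsmul := hgrad.smul_eq_of_forall_inner_le_mul hsupp (by rw [hx₀, mul_one])
  change NormedSpace.normalize _ = v
  rw [← NormedSpace.normalize_smul_of_pos hμ, hsmul,
    NormedSpace.normalize_eq_self_of_norm_eq_one hv1]
end

section
/- Let N be a norm on ℝ² whose restriction to ℝ² \ {0} is of class C¹. Then N is strictly convex (i.e., the closed unit ball B_N(0,1) is a strictly convex set) if and only if the Gauss map G : ∂B_N(0,1) → S¹ is injective. -/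
/-!
For a seminorm `p` differentiable at `x`, convexity gives `⟪∇p x, z⟫ ≤ p z` for all `z`, with
equality at `z = x` (Euler), so `∇p x` supports the unit ball at a point `x` of the unit sphere.
Conversely any `u` supporting the ball at `x` is a multiple of `∇p x`, because
`⟪u, x⟫ p - ⟪u, ·⟫` has a local minimum at `x`. Hence the points of the unit sphere on the
supporting line at `x` are exactly the `y` with `G y = G x`, and strict convexity says that this
set is `{x}`.
-/

open Set InnerProductSpace Filter Topology
open scoped RealInnerProductSpace

variable {E : Type*} [NormedAddCommGroup E] [InnerProductSpace ℝ E] [CompleteSpace E]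

theorem ConvexOn.inner_gradient_le_sub {f : E → ℝ} (hf : ConvexOn ℝ univ f) {x : E}
    (hx : DifferentiableAt ℝ f x) (z : E) : ⟪gradient f x, z⟫ ≤ f (x + z) - f x := by
  set g : ℝ →ᵃ[ℝ] E := AffineMap.lineMap x (x + z)
  have hline : HasDerivAt (f ∘ g) ⟪gradient f x, z⟫ 0 := by
    have hg : HasDerivAt g z 0 := by simpa using AffineMap.hasDerivAt_lineMap (a := x) (b := x + z)
    have hfx : HasFDerivAt f (toDual ℝ E (gradient f x)) (g 0) := by
      simpa [g] using hx.hasGradientAt.hasFDerivAt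
    simpa using hfx.comp_hasDerivAt (0 : ℝ) hg
  have := (hf.comp_affineMap g).le_slope_of_hasDerivAt
    (mem_univ 0) (mem_univ 1) zero_lt_one hline
  simpa [g, slope_def_field] using this

theorem eq_smul_gradient_of_eventually_inner_le {f : E → ℝ} {x u : E} {c : ℝ}
    (hf : DifferentiableAt ℝ f x) (hle : ∀ᶠ z in 𝓝 x, ⟪u, z⟫ ≤ c * f z)
    (heq : ⟪u, x⟫ = c * f x) : u = c • gradient f x := by
  have hmin : IsLocalMin (fun z => c * f z - ⟪u, z⟫) x := by
    filter_upwards [hle] with z hz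
    linarith
  have hderiv := (hf.hasGradientAt.hasFDerivAt.const_mul c).sub (innerSL ℝ u).hasFDerivAt
  have hzero := hmin.hasFDerivAt_eq_zero hderiv
  refine ext_inner_right ℝ fun w => ?_
  have := congrArg (· w) hzero
  simp only [sub_apply, smul_apply, toDual_apply_apply, smul_eq_mul, coe_innerSL_apply,
    zero_apply] at this
  rw [real_inner_smul_left]
  linarith

namespace Seminorm

variable (p : Seminorm ℝ E) {x : E}

theorem inner_gradient_le (hx : DifferentiableAt ℝ p x) (z : E) : ⟪gradient p x, z⟫ ≤ p z := by
  have := p.convexOn.inner_gradient_le_sub hx z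
  linarith [map_add_le_add p x z]

theorem inner_gradient_self (hx : DifferentiableAt ℝ p x) : ⟪gradient p x, x⟫ = p x := by
  have hle := p.convexOn.inner_gradient_le_sub hx x
  have hge := p.convexOn.inner_gradient_le_sub hx (-x)
  rw [← two_smul ℝ x, map_smul_eq_mul] at hle
  simp only [add_neg_cancel, map_zero, inner_neg_right] at hge
  rw [Real.norm_two] at hle
  linarith

theorem inner_normalize_gradient_le (hx : DifferentiableAt ℝ p x) {y : E} (hy : p y ≤ p x) :
    ⟪‖gradient p x‖⁻¹ • gradient p x, y⟫ ≤ ⟪‖gradient p x‖⁻¹ • gradient p x, x⟫ := by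
  rw [real_inner_smul_left, real_inner_smul_left, p.inner_gradient_self hx]
  exact mul_le_mul_of_nonneg_left ((p.inner_gradient_le hx y).trans hy) (by positivity)

theorem eq_inner_smul_gradient_of_forall_le (hx : DifferentiableAt ℝ p x) (hpx : p x = 1) {u : E}
    (hu : ∀ y, p y ≤ 1 → ⟪u, y⟫ ≤ ⟪u, x⟫) : u = ⟪u, x⟫ • gradient p x := by
  refine eq_smul_gradient_of_eventually_inner_le hx ?_ (by rw [hpx, mul_one])
  have hpos : ∀ᶠ z in 𝓝 x, 0 < p z := hx.continuousAt.eventually (lt_mem_nhds (by linarith))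
  filter_upwards [hpos] with z hz
  have hunit : p ((p z)⁻¹ • z) ≤ 1 := by
    rw [map_smul_eq_mul, Real.norm_eq_abs, abs_of_pos (inv_pos.2 hz), inv_mul_cancel₀ hz.ne']
  have := hu _ hunit
  rw [real_inner_smul_right, inv_mul_le_iff₀ hz] at this
  linarith

end Seminorm

theorem strictly_convex_iff_gauss_map_injective_general
    (N : EuclideanSpace ℝ (Fin 2) → ℝ)
    (hN_add : ∀ x y : EuclideanSpace ℝ (Fin 2), N (x + y) ≤ N x + N y)
    (hN_smul : ∀ (c : ℝ) (x : EuclideanSpace ℝ (Fin 2)), N (c • x) = |c| * N x)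
    (hN_C1 : ContDiffOn ℝ 1 N ({0}ᶜ : Set (EuclideanSpace ℝ (Fin 2)))) :
    (∀ x : EuclideanSpace ℝ (Fin 2), N x = 1 →
      ∃ u : EuclideanSpace ℝ (Fin 2), u ≠ 0 ∧
        (∀ y : EuclideanSpace ℝ (Fin 2), N y ≤ 1 → ⟪u, y⟫ ≤ ⟪u, x⟫) ∧
        (∀ y : EuclideanSpace ℝ (Fin 2), N y ≤ 1 → ⟪u, y⟫ = ⟪u, x⟫ → y = x)) ↔
    Set.InjOn (fun x : EuclideanSpace ℝ (Fin 2) => ‖gradient N x‖⁻¹ • gradient N x)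
      {x : EuclideanSpace ℝ (Fin 2) | N x = 1} := by
  obtain ⟨p, rfl⟩ : ∃ p : Seminorm ℝ (EuclideanSpace ℝ (Fin 2)), ⇑p = N :=
    ⟨Seminorm.of N hN_add fun c x => by rw [Real.norm_eq_abs, hN_smul], rfl⟩
  have hdiff : ∀ {x}, p x = 1 → DifferentiableAt ℝ p x := fun {x} hx =>
    (hN_C1.differentiableOn one_ne_zero).differentiableAt
      (isOpen_compl_singleton.mem_nhds fun h => by simp [mem_singleton_iff.1 h] at hx)
  have hgrad_ne : ∀ {x}, p x = 1 → gradient p x ≠ 0 := fun {x} hx h => by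
    simpa [h, hx] using p.inner_gradient_self (hdiff hx)
  constructor
  · rintro hconvex x hx y hy hxy
    obtain ⟨u, -, hu_le, hu_eq⟩ := hconvex x hx
    replace hxy : ‖gradient p x‖⁻¹ • gradient p x = ‖gradient p y‖⁻¹ • gradient p y := hxy
    have hface : ⟪gradient p x, y⟫ = ⟪gradient p x, x⟫ := by
      have hG : ⟪‖gradient p x‖⁻¹ • gradient p x, y⟫ = ⟪‖gradient p x‖⁻¹ • gradient p x, x⟫ :=
        le_antisymm (p.inner_normalize_gradient_le (hdiff hx) (hy.trans hx.symm).le)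
          (by rw [hxy]; exact p.inner_normalize_gradient_le (hdiff hy) (hx.trans hy.symm).le)
      simpa [real_inner_smul_left, hgrad_ne hx] using hG
    refine (hu_eq y hy.le ?_).symm
    rw [p.eq_inner_smul_gradient_of_forall_le (hdiff hx) hx hu_le, real_inner_smul_left,
      real_inner_smul_left, hface]
  · intro hinj x hx
    have hsupport : ∀ y, ⟪gradient p x, y⟫ ≤ p y := p.inner_gradient_le (hdiff hx)
    have hmax : ⟪gradient p x, x⟫ = 1 := (p.inner_gradient_self (hdiff hx)).trans hx
    refine ⟨gradient p x, hgrad_ne hx, fun y hy => hmax ▸ (hsupport y).trans hy, ?_⟩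
    intro y hy hface
    have hy1 : p y = 1 := le_antisymm hy (hmax ▸ hface ▸ hsupport y)
    have hgrad : gradient p x = gradient p y := by
      simpa using eq_smul_gradient_of_eventually_inner_le (c := 1) (hdiff hy1)
        (Eventually.of_forall fun z => by simpa using hsupport z)
        (by rw [hface, hmax, hy1, one_mul])
    exact hinj hy1 hx (by simp only [hgrad])

/-- for a norm `N` on ℝ² of class `C¹` away from `0`, the unit ball
`B_N(0,1)` is strictly convex (through every boundary point there is a
supporting line meeting the ball only in that point) if and only if the Gauss
map `G x = ∇N(x)/‖∇N(x)‖` is injective on the `N`-unit sphere. -/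
theorem strictly_convex_iff_gauss_map_injective
    (N : EuclideanSpace ℝ (Fin 2) → ℝ)
    (hN_add : ∀ x y : EuclideanSpace ℝ (Fin 2), N (x + y) ≤ N x + N y)
    (hN_smul : ∀ (c : ℝ) (x : EuclideanSpace ℝ (Fin 2)), N (c • x) = |c| * N x)
    (hN_zero : ∀ x : EuclideanSpace ℝ (Fin 2), N x = 0 → x = 0)
    (hN_C1 : ContDiffOn ℝ 1 N ({0}ᶜ : Set (EuclideanSpace ℝ (Fin 2)))) :
    (∀ x : EuclideanSpace ℝ (Fin 2), N x = 1 →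
      ∃ u : EuclideanSpace ℝ (Fin 2), u ≠ 0 ∧
        (∀ y : EuclideanSpace ℝ (Fin 2), N y ≤ 1 → ⟪u, y⟫ ≤ ⟪u, x⟫) ∧
        (∀ y : EuclideanSpace ℝ (Fin 2), N y ≤ 1 → ⟪u, y⟫ = ⟪u, x⟫ → y = x)) ↔
    Set.InjOn (fun x : EuclideanSpace ℝ (Fin 2) => ‖gradient N x‖⁻¹ • gradient N x)
      {x : EuclideanSpace ℝ (Fin 2) | N x = 1} :=
  strictly_convex_iff_gauss_map_injective_general N hN_add hN_smul hN_C1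
end

section
/- Let N be a strictly convex norm on ℝ² whose restriction to ℝ² \ {0} is of class C¹, and assume the Gauss map G : ∂B_N(0,1) → S¹ is bijective. Then for every v ∈ S¹ and every x ∈ ℝ², the closest-point projection of x onto H_v with respect to N is given by P_v(x) = x − G⁻¹(v) · ⟨v, x⟩ / ⟨v, G⁻¹(v)⟩. In particular, for each fixed v the map x ↦ P_v(x) is linear. -/
open Set Metric Filter Topology
open scoped RealInnerProductSpace

/-!
At `u = G⁻¹(v)` the gradient `g` of `N` is a supporting functional of the unit ball: the
tangent inequality of the convex function `N` together with homogeneity gives `⟪g, w⟫ ≤ N w`,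
with equality at `u`. As `v` is a positive multiple of `g`, every `q ∈ H_v` satisfies
`|⟪v, x⟫| = |⟪v, x - q⟫| ≤ ⟪v, u⟫ N (x - q)`, so the point of `H_v` reached from `x` along `u`
is a nearest point. Strict convexity of the unit ball makes nearest points unique.
-/

theorem ConvexOn.add_fderiv_sub_le {E : Type*} [NormedAddCommGroup E] [NormedSpace ℝ E]
    {S : Set E} {f : E → ℝ} {f' : E →L[ℝ] ℝ} {x y : E} (hf : ConvexOn ℝ S f)
    (hx : x ∈ S) (hy : y ∈ S) (hf' : HasFDerivAt f f' x) : f x + f' (y - x) ≤ f y := by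
  set L : ℝ →ᵃ[ℝ] E := AffineMap.lineMap x y
  have hφ : ConvexOn ℝ (L ⁻¹' S) (f ∘ L) := hf.comp_affineMap L
  have hφ' : HasDerivAt (f ∘ L) (f' (y - x)) 0 := by
    have hf'0 : HasFDerivAt f f' (L 0) := by simpa [L] using hf'
    exact hf'0.comp_hasDerivAt 0 AffineMap.hasDerivAt_lineMap
  have := hφ.le_slope_of_hasDerivAt (by simpa [L] using hx) (by simpa [L] using hy) one_pos hφ'
  simp only [slope, L, AffineMap.lineMap_apply_one, AffineMap.lineMap_apply_zero, sub_zero,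
    vsub_eq_sub, inv_one, one_smul, Function.comp_apply] at this
  linarith

namespace Seminorm

variable {E : Type*} [NormedAddCommGroup E] [NormedSpace ℝ E] (p : Seminorm ℝ E)

/-- Euler's identity, read off from the tangent inequality at `2 • u` and at `0`. -/
theorem apply_self_of_hasFDerivAt {f' : E →L[ℝ] ℝ} {u : E} (hf' : HasFDerivAt p f' u) :
    f' u = p u := by
  have h₂ := p.convexOn.add_fderiv_sub_le (mem_univ u) (mem_univ ((2 : ℝ) • u)) hf'
  have h₀ := p.convexOn.add_fderiv_sub_le (mem_univ u) (mem_univ 0) hf'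
  rw [map_smul_eq_mul, Real.norm_two, two_smul, add_sub_cancel_right] at h₂
  rw [map_zero, zero_sub, map_neg] at h₀
  linarith

theorem apply_le_of_hasFDerivAt {f' : E →L[ℝ] ℝ} {u : E} (hf' : HasFDerivAt p f' u) (y : E) :
    f' y ≤ p y := by
  have := p.convexOn.add_fderiv_sub_le (mem_univ u) (mem_univ y) hf'
  rw [map_sub, p.apply_self_of_hasFDerivAt hf'] at this
  linarith

theorem lt_one_of_mem_interior {z : E} (hz : z ∈ interior {x | p x ≤ 1}) : p z < 1 := by
  have hnhds : ∀ᶠ s in 𝓝 (1 : ℝ), s • z ∈ interior {x | p x ≤ 1} :=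
    (continuous_id.smul continuous_const).continuousAt.preimage_mem_nhds
      (by simpa using isOpen_interior.mem_nhds hz)
  obtain ⟨s, hs, hs1⟩ := ((hnhds.filter_mono nhdsWithin_le_nhds).and
    (self_mem_nhdsWithin : Ioi (1 : ℝ) ∈ 𝓝[>] 1)).exists
  have hle : s * p z ≤ 1 := by
    simpa [map_smul_eq_mul, abs_of_pos (one_pos.trans hs1)] using interior_subset hs
  nlinarith [apply_nonneg p z, show (1 : ℝ) < s from hs1]

variable {p}

theorem add_lt_of_strictConvex (hp : StrictConvex ℝ {x | p x ≤ 1})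
    (hp₀ : ∀ x, p x = 0 → x = 0) {x y : E} (hxy : x ≠ y) (h : p x = p y) :
    p (x + y) < p x + p y := by
  have hpos : 0 < p x := (apply_nonneg p x).lt_of_ne fun h₀ ↦
    hxy ((hp₀ x h₀.symm).trans (hp₀ y (h ▸ h₀.symm)).symm)
  have hunit : ∀ z, p z = p x → p ((p x)⁻¹ • z) ≤ 1 := fun z hz ↦ by
    rw [map_smul_eq_mul, Real.norm_eq_abs, abs_inv, abs_of_pos hpos, hz, inv_mul_cancel₀ hpos.ne']
  have hmid := p.lt_one_of_mem_interior <| hp (hunit x rfl) (hunit y h.symm)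
    (fun he ↦ hxy (smul_right_injective E (inv_ne_zero hpos.ne') he))
    one_half_pos one_half_pos (add_halves 1)
  have hsum : x + y = (2 * p x) • ((1 / 2 : ℝ) • (p x)⁻¹ • x + (1 / 2 : ℝ) • (p x)⁻¹ • y) := by
    match_scalars <;> field_simp
  rw [hsum, map_smul_eq_mul, Real.norm_eq_abs, abs_of_pos (by positivity), ← h]
  nlinarith

theorem eq_of_isMinOn_of_strictConvex (hp : StrictConvex ℝ {x | p x ≤ 1})
    (hp₀ : ∀ x, p x = 0 → x = 0) {S : Set E} (hS : Convex ℝ S) {x q₁ q₂ : E}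
    (hq₁ : q₁ ∈ S) (hq₂ : q₂ ∈ S) (h₁ : IsMinOn (fun q ↦ p (x - q)) S q₁)
    (h₂ : IsMinOn (fun q ↦ p (x - q)) S q₂) : q₁ = q₂ := by
  by_contra hne
  have heq : p (x - q₁) = p (x - q₂) := le_antisymm (h₁ hq₂) (h₂ hq₁)
  have hlt := add_lt_of_strictConvex hp hp₀ (sub_right_injective.ne hne) heq
  have hsplit :
      x - ((1 / 2 : ℝ) • q₁ + (1 / 2 : ℝ) • q₂) = (1 / 2 : ℝ) • (x - q₁ + (x - q₂)) := by
    module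
  have hmid : p (x - q₁) ≤ p (x - ((1 / 2 : ℝ) • q₁ + (1 / 2 : ℝ) • q₂)) :=
    h₁ (hS hq₁ hq₂ one_half_pos.le one_half_pos.le (add_halves 1))
  rw [hsplit, map_smul_eq_mul, Real.norm_eq_abs, abs_of_pos one_half_pos] at hmid
  linarith

end Seminorm

theorem Seminorm.isMinOn_sub_smul {E : Type*} [AddCommGroup E] [Module ℝ E] (p : Seminorm ℝ E)
    (ℓ : E →ₗ[ℝ] ℝ) {u : E} (hu : p u ≤ 1) (hℓu : 0 < ℓ u) (hℓ : ∀ w, ℓ w ≤ ℓ u * p w) (x : E) :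
    IsMinOn (fun q ↦ p (x - q)) {q | ℓ q = 0} (x - (ℓ x / ℓ u) • u) := by
  intro q (hq : ℓ q = 0)
  have habs : |ℓ x| ≤ ℓ u * p (x - q) := by
    have h := hℓ (x - q)
    have h' := hℓ (q - x)
    rw [map_sub, hq] at h h'
    rw [← map_neg_eq_map p, neg_sub] at h'
    exact abs_le.mpr ⟨by linarith, by linarith⟩
  calc p (x - (x - (ℓ x / ℓ u) • u)) = |ℓ x| / ℓ u * p u := by
        rw [sub_sub_cancel, map_smul_eq_mul, Real.norm_eq_abs, abs_div, abs_of_pos hℓu]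
    _ ≤ |ℓ x| / ℓ u := mul_le_of_le_one_right (by positivity) hu
    _ ≤ p (x - q) := (div_le_iff₀' hℓu).mpr habs

/-- for a strictly convex norm `N` on ℝ², `C¹` away from `0`, with
bijective Gauss map `G`, the closest-point projection onto the line `H_v`
orthogonal to `v ∈ S¹` is given by
`P_v(x) = x − (⟪v,x⟫ / ⟪v, G⁻¹ v⟫) • G⁻¹ v`; in particular `P_v` is linear. -/
theorem closest_point_projection_formula
    (N : EuclideanSpace ℝ (Fin 2) → ℝ)
    (hN_add : ∀ x y : EuclideanSpace ℝ (Fin 2), N (x + y) ≤ N x + N y)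
    (hN_smul : ∀ (c : ℝ) (x : EuclideanSpace ℝ (Fin 2)), N (c • x) = |c| * N x)
    (hN_zero : ∀ x : EuclideanSpace ℝ (Fin 2), N x = 0 → x = 0)
    (hN_strict : StrictConvex ℝ {x : EuclideanSpace ℝ (Fin 2) | N x ≤ 1})
    (hN_C1 : ContDiffOn ℝ 1 N ({0}ᶜ : Set (EuclideanSpace ℝ (Fin 2))))
    -- the Gauss map `G x = ∇N(x)/‖∇N(x)‖` is a bijection from the `N`-unit
    -- sphere onto `S¹`, with inverse `Ginv`:
    (hG_bij : Set.BijOn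
      (fun x : EuclideanSpace ℝ (Fin 2) => ‖gradient N x‖⁻¹ • gradient N x)
      {x : EuclideanSpace ℝ (Fin 2) | N x = 1}
      (sphere (0 : EuclideanSpace ℝ (Fin 2)) 1))
    (Ginv : EuclideanSpace ℝ (Fin 2) → EuclideanSpace ℝ (Fin 2))
    (hGinv : Set.InvOn Ginv
      (fun x : EuclideanSpace ℝ (Fin 2) => ‖gradient N x‖⁻¹ • gradient N x)
      {x : EuclideanSpace ℝ (Fin 2) | N x = 1}
      (sphere (0 : EuclideanSpace ℝ (Fin 2)) 1))
    -- `P v` is the closest-point projection (w.r.t. `N`) onto the line `H_v`: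
    (P : EuclideanSpace ℝ (Fin 2) → EuclideanSpace ℝ (Fin 2) → EuclideanSpace ℝ (Fin 2))
    (hP : ∀ v ∈ sphere (0 : EuclideanSpace ℝ (Fin 2)) 1, ∀ x : EuclideanSpace ℝ (Fin 2),
      ⟪v, P v x⟫ = 0 ∧
        ∀ q : EuclideanSpace ℝ (Fin 2), ⟪v, q⟫ = 0 → N (x - P v x) ≤ N (x - q)) :
    ∀ v ∈ sphere (0 : EuclideanSpace ℝ (Fin 2)) 1,
      (∀ x : EuclideanSpace ℝ (Fin 2),
        P v x = x - (⟪v, x⟫ / ⟪v, Ginv v⟫) • Ginv v) ∧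
      IsLinearMap ℝ (P v) := by
  intro v hv
  let p : Seminorm ℝ (EuclideanSpace ℝ (Fin 2)) :=
    Seminorm.of N hN_add fun c x ↦ by rw [hN_smul, Real.norm_eq_abs]
  have hpN : ∀ x, p x = N x := fun _ ↦ rfl
  set u := Ginv v
  have hu : N u = 1 := hGinv.1.mapsTo hG_bij.surjOn hv
  have hu₀ : u ≠ 0 := fun h ↦ by simp [h, ← hpN] at hu
  set g := gradient N u
  have hgrad : HasFDerivAt p (InnerProductSpace.toDual ℝ _ g) u :=
    ((hN_C1.differentiableOn one_ne_zero).differentiableAt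
      (isOpen_compl_singleton.mem_nhds hu₀)).hasGradientAt.hasFDerivAt
  have hgu : ⟪g, u⟫ = 1 := by simpa [hpN, hu] using p.apply_self_of_hasFDerivAt hgrad
  have hvg : v = ‖g‖⁻¹ • g := (hGinv.2 hv).symm
  have hvu : 0 < ⟪v, u⟫ := by
    rw [hvg, real_inner_smul_left, hgu, mul_one, inv_pos, norm_pos_iff]
    exact fun h ↦ by simp [h] at hgu
  have hsupp : ∀ w, ⟪v, w⟫ ≤ ⟪v, u⟫ * p w := fun w ↦ by
    rw [hvg, real_inner_smul_left, real_inner_smul_left, hgu, mul_one]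
    exact mul_le_mul_of_nonneg_left (by simpa using p.apply_le_of_hasFDerivAt hgrad w)
      (by positivity)
  have hmem : ∀ x, ⟪v, x - (⟪v, x⟫ / ⟪v, u⟫) • u⟫ = 0 := fun x ↦ by
    rw [inner_sub_right, real_inner_smul_right, div_mul_cancel₀ _ hvu.ne', sub_self]
  have hformula : ∀ x, P v x = x - (⟪v, x⟫ / ⟪v, u⟫) • u := fun x ↦
    p.eq_of_isMinOn_of_strictConvex hN_strict hN_zero
      (convex_hyperplane (innerₛₗ ℝ v).isLinear 0) (hP v hv x).1 (hmem x) (hP v hv x).2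
      (p.isMinOn_sub_smul (innerₛₗ ℝ v) hu.le hvu hsupp x)
  refine ⟨hformula, ⟨fun x y ↦ ?_, fun c x ↦ ?_⟩⟩
  · simp only [hformula, inner_add_right, add_div, add_smul]
    abel
  · simp only [hformula, real_inner_smul_right, mul_div_assoc, mul_smul]
    module
end

section
/- Let N be a norm on ℝ² whose restriction to ℝ² \ {0} is of class C² and whose Gauss map G : ∂B_N(0,1) → S¹ is a C¹-diffeomorphism. Fix x ∈ ℝ² \ {0} and t₀ ∈ ℝ such that P_{v(t₀)}(x) = 0, and define ψ : ℝ → ℝ by ψ(t) = ⟨v(t), x⟩ / ⟨v(t), G⁻¹(v(t))⟩. Then ψ(t₀) ≠ 0 and ψ'(t₀) = 0. -/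
open Set Metric Real
open scoped RealInnerProductSpace

noncomputable section

/-- The point `(a, b)` of the Euclidean plane. -/
def mk2 (a b : ℝ) : EuclideanSpace ℝ (Fin 2) :=
  (WithLp.equiv 2 (Fin 2 → ℝ)).symm ![a, b]

/-- The direction `v(t) = (cos t, sin t) ∈ S¹`. -/
def vdir (t : ℝ) : EuclideanSpace ℝ (Fin 2) :=
  mk2 (Real.cos t) (Real.sin t)

/-!
At a point where `P_v(x) = 0`, the origin minimises `N(x - ·)` on `v^⊥`, so `∇N(x)` is parallel
to `v = v(t₀)`; since `∇N` is odd and invariant under positive scaling, this makes `x` a nonzero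
multiple of `y(t₀) = G⁻¹(v)`. Euler's identity `⟪∇N(y), y⟫ = N(y) = 1` gives `⟪v, y(t₀)⟫ ≠ 0`, and
differentiating `N(y(t)) = 1` gives `⟪v, y'(t₀)⟫ = 0`. With `x = c • y(t₀)`, the two surviving
terms of the quotient rule for `ψ'(t₀)` cancel.
-/

section Homogeneous

variable {E : Type*} [NormedAddCommGroup E] [NormedSpace ℝ E] {N : E → ℝ}

lemma pos_of_add_le_of_smul_eq (hN_add : ∀ x y : E, N (x + y) ≤ N x + N y)
    (hN_smul : ∀ (c : ℝ) (x : E), N (c • x) = |c| * N x) (hN_zero : ∀ x : E, N x = 0 → x = 0)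
    {p : E} (hp : p ≠ 0) : 0 < N p := by
  have h := hN_add p (-p)
  rw [add_neg_cancel, ← zero_smul ℝ (0 : E), hN_smul, ← neg_one_smul ℝ p, hN_smul] at h
  norm_num at h
  exact lt_of_le_of_ne (by linarith) fun h0 => hp (hN_zero p h0.symm)

lemma smul_fderiv_smul_of_smul_eq (hN_smul : ∀ (c : ℝ) (x : E), N (c • x) = |c| * N x)
    (c : ℝ) (p : E) : c • fderiv ℝ N (c • p) = |c| • fderiv ℝ N p := by
  have hfun : (fun q => N (c • q)) = |c| • N := funext fun q => hN_smul c q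
  rw [← fderiv_comp_smul, hfun, fderiv_const_smul_field]
  rfl

lemma fderiv_apply_self_of_smul_eq (hN_smul : ∀ (c : ℝ) (x : E), N (c • x) = |c| * N x)
    {p : E} (hd : DifferentiableAt ℝ N p) : fderiv ℝ N p p = N p := by
  have hline : HasDerivAt (fun s : ℝ => N (s • p)) (fderiv ℝ N p p) 1 := by
    have hfd : HasFDerivAt N (fderiv ℝ N p) ((1 : ℝ) • p) := by
      simpa using hd.hasFDerivAt
    have := hfd.comp_hasDerivAt (1 : ℝ) ((hasDerivAt_id (1 : ℝ)).smul_const p)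
    simpa [Function.comp_def] using this
  have hlin : (fun s : ℝ => s * N p) =ᶠ[nhds 1] fun s => N (s • p) := by
    filter_upwards [Ioi_mem_nhds one_pos] with s hs
    rw [hN_smul, abs_of_pos hs]
  have hray : HasDerivAt (fun s : ℝ => N (s • p)) (N p) 1 := by
    simpa using ((hasDerivAt_id (1 : ℝ)).mul_const (N p)).congr_of_eventuallyEq hlin.symm
  exact hline.unique hray

end Homogeneous

section Gradient

variable {E : Type*} [NormedAddCommGroup E] [InnerProductSpace ℝ E] [CompleteSpace E] {N : E → ℝ}

def gaussMap (N : E → ℝ) (p : E) : E := ‖gradient N p‖⁻¹ • gradient N p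

lemma smul_gradient_smul_of_smul_eq (hN_smul : ∀ (c : ℝ) (x : E), N (c • x) = |c| * N x)
    (c : ℝ) (p : E) : c • gradient N (c • p) = |c| • gradient N p := by
  simp only [gradient, ← map_smul, smul_fderiv_smul_of_smul_eq hN_smul]

lemma inner_gradient_self_of_smul_eq (hN_smul : ∀ (c : ℝ) (x : E), N (c • x) = |c| * N x)
    {p : E} (hd : DifferentiableAt ℝ N p) : ⟪gradient N p, p⟫ = N p := by
  rw [inner_gradient_left, fderiv_apply_self_of_smul_eq hN_smul hd]

lemma inner_gaussMap_self_ne_zero (hN_smul : ∀ (c : ℝ) (x : E), N (c • x) = |c| * N x)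
    {p : E} (hd : DifferentiableAt ℝ N p) (hp : N p ≠ 0) : ⟪gaussMap N p, p⟫ ≠ 0 := by
  have h := inner_gradient_self_of_smul_eq hN_smul hd
  have hg : gradient N p ≠ 0 := by
    rintro hg
    rw [hg, inner_zero_left] at h
    exact hp h.symm
  rw [gaussMap, real_inner_smul_left, h]
  exact mul_ne_zero (inv_ne_zero (norm_ne_zero_iff.mpr hg)) hp

lemma gaussMap_eq_of_gradient_eq_smul {p v : E} {r : ℝ} (hv : ‖v‖ = 1) (hr : 0 < r)
    (h : gradient N p = r • v) : gaussMap N p = v := by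
  rw [gaussMap, h, norm_smul, hv, Real.norm_of_nonneg hr.le, mul_one, smul_smul,
    inv_mul_cancel₀ hr.ne', one_smul]

lemma gradient_mem_span_of_forall_inner_eq_zero_le {x v : E} (hd : DifferentiableAt ℝ N x)
    (hmin : ∀ q : E, ⟪v, q⟫ = 0 → N x ≤ N (x - q)) : gradient N x ∈ ℝ ∙ v := by
  rw [← Submodule.orthogonal_orthogonal (ℝ ∙ v)]
  intro w hw
  have hwv : ∀ s : ℝ, ⟪v, s • w⟫ = 0 := fun s => by
    rw [real_inner_smul_right, Submodule.inner_right_of_mem_orthogonal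
      (Submodule.mem_span_singleton_self v) hw, mul_zero]
  have hloc : IsLocalMin (fun s : ℝ => N (x - s • w)) 0 :=
    Filter.Eventually.of_forall fun s => by simpa using hmin _ (hwv s)
  have hline : HasDerivAt (fun s : ℝ => N (x - s • w)) (fderiv ℝ N x (-w)) 0 := by
    have hfd : HasFDerivAt N (fderiv ℝ N x) (x - (0 : ℝ) • w) := by simpa using hd.hasFDerivAt
    have := hfd.comp_hasDerivAt (0 : ℝ) (((hasDerivAt_id (0 : ℝ)).smul_const w).const_sub x)
    simpa [Function.comp_def] using this
  have h0 := hloc.hasDerivAt_eq_zero hline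
  rw [map_neg, neg_eq_zero, ← inner_gradient_left] at h0
  rw [real_inner_comm, h0]

/-- The witness is `c = sign r / N x`, where `∇N(x) = r • v`. -/
lemma exists_smul_gaussMap_eq (hN_smul : ∀ (c : ℝ) (x : E), N (c • x) = |c| * N x)
    {x v : E} (hx : 0 < N x) (hd : DifferentiableAt ℝ N x) (hv : ‖v‖ = 1)
    (hgrad : gradient N x ∈ ℝ ∙ v) :
    ∃ c : ℝ, c ≠ 0 ∧ N (c • x) = 1 ∧ gaussMap N (c • x) = v := by
  obtain ⟨r, hr⟩ := Submodule.mem_span_singleton.1 hgrad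
  have hr0 : r ≠ 0 := by
    rintro rfl
    have h := inner_gradient_self_of_smul_eq hN_smul hd
    rw [← hr, zero_smul, inner_zero_left] at h
    exact hx.ne h
  set c := r / (|r| * N x) with hc_def
  have hc : c ≠ 0 := div_ne_zero hr0 (by positivity)
  have habs : |c| = (N x)⁻¹ := by
    rw [hc_def, abs_div, abs_mul, abs_abs, abs_of_pos hx]
    field_simp
  refine ⟨c, hc, by rw [hN_smul, habs, inv_mul_cancel₀ hx.ne'], ?_⟩
  refine gaussMap_eq_of_gradient_eq_smul hv (abs_pos.2 hr0) ?_
  calc gradient N (c • x) = c⁻¹ • c • gradient N (c • x) := (inv_smul_smul₀ hc _).symm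
    _ = (c⁻¹ * |c| * r) • v := by rw [smul_gradient_smul_of_smul_eq hN_smul, ← hr, smul_smul,
        smul_smul]
    _ = |r| • v := by
        rw [habs, hc_def]
        field_simp

lemma inner_gaussMap_deriv_eq_zero {y : ℝ → E} {t₀ : ℝ} (hy : ∀ t, N (y t) = 1)
    (hyd : DifferentiableAt ℝ y t₀) (hd : DifferentiableAt ℝ N (y t₀)) :
    ⟪gaussMap N (y t₀), deriv y t₀⟫ = 0 := by
  have hcomp := hd.hasFDerivAt.comp_hasDerivAt t₀ hyd.hasDerivAt
  have hconst : N ∘ y = fun _ => (1 : ℝ) := funext hy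
  rw [hconst] at hcomp
  rw [gaussMap, real_inner_smul_left, inner_gradient_left, hcomp.unique (hasDerivAt_const t₀ 1),
    mul_zero]

end Gradient

section Calculus

variable {E : Type*} [NormedAddCommGroup E] [InnerProductSpace ℝ E]

lemma deriv_inner_smul_div_inner_eq_zero {u y : ℝ → E} {t₀ : ℝ} (c : ℝ)
    (hu : DifferentiableAt ℝ u t₀) (hy : DifferentiableAt ℝ y t₀)
    (horth : ⟪u t₀, deriv y t₀⟫ = 0) (hne : ⟪u t₀, y t₀⟫ ≠ 0) :
    deriv (fun t => ⟪u t, c • y t₀⟫ / ⟪u t, y t⟫) t₀ = 0 := by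
  have hnum := hu.hasDerivAt.inner ℝ (hasDerivAt_const t₀ (c • y t₀))
  have hden := hu.hasDerivAt.inner ℝ hy.hasDerivAt
  rw [(hnum.fun_div hden hne).deriv]
  simp only [horth, inner_zero_right, inner_smul_right]
  ring

end Calculus

lemma norm_vdir (t : ℝ) : ‖vdir t‖ = 1 := by
  simp [vdir, mk2, EuclideanSpace.norm_eq, Fin.sum_univ_two]

lemma differentiable_vdir : Differentiable ℝ vdir :=
  (EuclideanSpace.equiv (Fin 2) ℝ).symm.differentiable.comp <| differentiable_pi.2 fun i => by
    fin_cases i <;> simp [Real.differentiable_cos, Real.differentiable_sin]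

theorem psi_ne_zero_and_deriv_psi_eq_zero_general
    (N : EuclideanSpace ℝ (Fin 2) → ℝ)
    (hN_add : ∀ x y : EuclideanSpace ℝ (Fin 2), N (x + y) ≤ N x + N y)
    (hN_smul : ∀ (c : ℝ) (x : EuclideanSpace ℝ (Fin 2)), N (c • x) = |c| * N x)
    (hN_zero : ∀ x : EuclideanSpace ℝ (Fin 2), N x = 0 → x = 0)
    (hN_C2 : ContDiffOn ℝ 2 N ({0}ᶜ : Set (EuclideanSpace ℝ (Fin 2))))
    -- the Gauss map `G x = ∇N(x)/‖∇N(x)‖` is a `C¹`-diffeomorphism from the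
    -- `N`-unit sphere onto `S¹`, with inverse `Ginv`:
    (Ginv : EuclideanSpace ℝ (Fin 2) → EuclideanSpace ℝ (Fin 2))
    (hG_bij : Set.BijOn
      (fun x : EuclideanSpace ℝ (Fin 2) => ‖gradient N x‖⁻¹ • gradient N x)
      {x : EuclideanSpace ℝ (Fin 2) | N x = 1}
      (sphere (0 : EuclideanSpace ℝ (Fin 2)) 1))
    (hGinv : Set.InvOn Ginv
      (fun x : EuclideanSpace ℝ (Fin 2) => ‖gradient N x‖⁻¹ • gradient N x)
      {x : EuclideanSpace ℝ (Fin 2) | N x = 1}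
      (sphere (0 : EuclideanSpace ℝ (Fin 2)) 1))
    (hGinv_C1 : ContDiff ℝ 1 (fun t : ℝ => Ginv (vdir t)))
    -- `P v` is the closest-point projection (w.r.t. `N`) onto `H_v`:
    (P : EuclideanSpace ℝ (Fin 2) → EuclideanSpace ℝ (Fin 2) → EuclideanSpace ℝ (Fin 2))
    (hP : ∀ v ∈ sphere (0 : EuclideanSpace ℝ (Fin 2)) 1, ∀ x : EuclideanSpace ℝ (Fin 2),
      ⟪v, P v x⟫ = 0 ∧
        ∀ q : EuclideanSpace ℝ (Fin 2), ⟪v, q⟫ = 0 → N (x - P v x) ≤ N (x - q))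
    (x : EuclideanSpace ℝ (Fin 2)) (hx : x ≠ 0)
    (t₀ : ℝ) (hx0 : P (vdir t₀) x = 0) :
    (fun t : ℝ => ⟪vdir t, x⟫ / ⟪vdir t, Ginv (vdir t)⟫) t₀ ≠ 0 ∧
    deriv (fun t : ℝ => ⟪vdir t, x⟫ / ⟪vdir t, Ginv (vdir t)⟫) t₀ = 0 := by
  have hNd : ∀ p : EuclideanSpace ℝ (Fin 2), p ≠ 0 → DifferentiableAt ℝ N p := fun p hp =>
    (hN_C2.contDiffAt (isOpen_compl_singleton.mem_nhds hp)).differentiableAt (by norm_num)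
  have hv : ∀ t, vdir t ∈ sphere (0 : EuclideanSpace ℝ (Fin 2)) 1 := fun t => by
    simpa using norm_vdir t
  have hy : ∀ t, N (Ginv (vdir t)) = 1 := fun t => (hG_bij.symm hGinv.symm).mapsTo (hv t)
  have hN0 : N 0 = 0 := by simpa using hN_smul 0 0
  have hy₀ : Ginv (vdir t₀) ≠ 0 := fun h => by simpa [h, hN0] using hy t₀
  have hyd : DifferentiableAt ℝ (fun t => Ginv (vdir t)) t₀ :=
    hGinv_C1.differentiable one_ne_zero t₀
  have hGy : gaussMap N (Ginv (vdir t₀)) = vdir t₀ := hGinv.2 (hv t₀)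
  have hgrad : gradient N x ∈ ℝ ∙ vdir t₀ :=
    gradient_mem_span_of_forall_inner_eq_zero_le (hNd x hx) fun q hq => by
      simpa [hx0] using (hP _ (hv t₀) x).2 q hq
  obtain ⟨c, hc, hNc, hGc⟩ := exists_smul_gaussMap_eq hN_smul
    (pos_of_add_le_of_smul_eq hN_add hN_smul hN_zero hx) (hNd x hx) (norm_vdir t₀) hgrad
  have hxc : x = c⁻¹ • Ginv (vdir t₀) := by
    have h : Ginv (gaussMap N (c • x)) = c • x := hGinv.1 hNc
    rw [← hGc, h, inv_smul_smul₀ hc]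
  have hne : ⟪vdir t₀, Ginv (vdir t₀)⟫ ≠ 0 := by
    simpa only [hGy] using
      inner_gaussMap_self_ne_zero hN_smul (hNd _ hy₀) ((hy t₀).symm ▸ one_ne_zero)
  have horth : ⟪vdir t₀, deriv (fun t => Ginv (vdir t)) t₀⟫ = 0 := by
    simpa only [hGy] using inner_gaussMap_deriv_eq_zero hy hyd (hNd _ hy₀)
  subst hxc
  refine ⟨?_, deriv_inner_smul_div_inner_eq_zero (u := vdir) (y := fun t => Ginv (vdir t)) c⁻¹
    (differentiable_vdir t₀) hyd horth hne⟩
  simp [real_inner_smul_right, hne, hc]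

/-- for `N` of class `C²` away from `0` with Gauss map a
`C¹`-diffeomorphism, if `x ≠ 0` and `P_{v(t₀)}(x) = 0`, then the function
`ψ(t) = ⟪v(t), x⟫ / ⟪v(t), G⁻¹(v(t))⟫` satisfies `ψ(t₀) ≠ 0` and `ψ'(t₀) = 0`. -/
theorem psi_ne_zero_and_deriv_psi_eq_zero
    (N : EuclideanSpace ℝ (Fin 2) → ℝ)
    (hN_add : ∀ x y : EuclideanSpace ℝ (Fin 2), N (x + y) ≤ N x + N y)
    (hN_smul : ∀ (c : ℝ) (x : EuclideanSpace ℝ (Fin 2)), N (c • x) = |c| * N x)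
    (hN_zero : ∀ x : EuclideanSpace ℝ (Fin 2), N x = 0 → x = 0)
    (hN_C2 : ContDiffOn ℝ 2 N ({0}ᶜ : Set (EuclideanSpace ℝ (Fin 2))))
    -- the Gauss map `G x = ∇N(x)/‖∇N(x)‖` is a `C¹`-diffeomorphism from the
    -- `N`-unit sphere onto `S¹`, with inverse `Ginv`:
    (Ginv : EuclideanSpace ℝ (Fin 2) → EuclideanSpace ℝ (Fin 2))
    (hG_bij : Set.BijOn
      (fun x : EuclideanSpace ℝ (Fin 2) => ‖gradient N x‖⁻¹ • gradient N x)
      {x : EuclideanSpace ℝ (Fin 2) | N x = 1}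
      (sphere (0 : EuclideanSpace ℝ (Fin 2)) 1))
    (hGinv : Set.InvOn Ginv
      (fun x : EuclideanSpace ℝ (Fin 2) => ‖gradient N x‖⁻¹ • gradient N x)
      {x : EuclideanSpace ℝ (Fin 2) | N x = 1}
      (sphere (0 : EuclideanSpace ℝ (Fin 2)) 1))
    (hGinv_C1 : ContDiff ℝ 1 (fun t : ℝ => Ginv (vdir t)))
    (hGinv_reg : ∀ t : ℝ, deriv (fun s : ℝ => Ginv (vdir s)) t ≠ 0)
    -- `P v` is the closest-point projection (w.r.t. `N`) onto `H_v`: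
    (P : EuclideanSpace ℝ (Fin 2) → EuclideanSpace ℝ (Fin 2) → EuclideanSpace ℝ (Fin 2))
    (hP : ∀ v ∈ sphere (0 : EuclideanSpace ℝ (Fin 2)) 1, ∀ x : EuclideanSpace ℝ (Fin 2),
      ⟪v, P v x⟫ = 0 ∧
        ∀ q : EuclideanSpace ℝ (Fin 2), ⟪v, q⟫ = 0 → N (x - P v x) ≤ N (x - q))
    (x : EuclideanSpace ℝ (Fin 2)) (hx : x ≠ 0)
    (t₀ : ℝ) (hx0 : P (vdir t₀) x = 0) :
    (fun t : ℝ => ⟪vdir t, x⟫ / ⟪vdir t, Ginv (vdir t)⟫) t₀ ≠ 0 ∧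
    deriv (fun t : ℝ => ⟪vdir t, x⟫ / ⟪vdir t, Ginv (vdir t)⟫) t₀ = 0 :=
  psi_ne_zero_and_deriv_psi_eq_zero_general N hN_add hN_smul hN_zero hN_C2 Ginv hG_bij hGinv
    hGinv_C1 P hP x hx t₀ hx0
end
end

section
/- For every p with 2 ≤ p < ∞ there exists δ ∈ (0,1] such that the p-norm ‖(x,y)‖_p = (|x|^p + |y|^p)^{1/p}, restricted to ℝ² \ {0}, is of class C^{2,δ}. -/
open Set Metric Real

noncomputable section

def pNorm (p : ℝ) (x : EuclideanSpace ℝ (Fin 2)) : ℝ :=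
  (|x 0| ^ p + |x 1| ^ p) ^ (1 / p)

/-!
Write `‖x‖_p = h (g x)` with `g x = ∑ i, |x i| ^ p` and `h s = s ^ (1 / p)`, which is smooth
on `(0, ∞)`. For `p ≥ 2` the map `t ↦ |t| ^ p` is `C²` with second derivative
`p (p - 1) |t| ^ (p - 2)`, and `t ↦ |t| ^ (p - 2)` is Hölder on compact sets (exponent
`min (p - 2) 1`, or `1` when `p = 2`); hence so is the Hessian of `g`. The Hessian of `h ∘ g` is
`Φ (x, D²g x)` with `Φ (x, H) = h' (g x) • H + h'' (g x) • Dg x ⊗ Dg x`, a `C¹` map. A `C¹` map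
is Lipschitz on compact sets, so composing it with the Hölder map `x ↦ (x, D²g x)` preserves the
Hölder exponent.
-/

open scoped NNReal

section LocallyHolder

variable {X Y Z : Type*} [PseudoMetricSpace X] [PseudoMetricSpace Y] [PseudoMetricSpace Z]

def LocallyHolderOn (r : ℝ≥0) (f : X → Y) (s : Set X) : Prop :=
  ∀ K ⊆ s, IsCompact K → ∃ C, HolderOnWith C r f K

namespace LocallyHolderOn

variable {r r' : ℝ≥0} {f f' : X → Y} {s : Set X}

theorem mono {t : Set X} (hf : LocallyHolderOn r f s) (ht : t ⊆ s) : LocallyHolderOn r f t :=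
  fun K hK => hf K (hK.trans ht)

theorem congr (hf : LocallyHolderOn r f s) (hff' : EqOn f f' s) : LocallyHolderOn r f' s := by
  intro K hKs hK
  obtain ⟨C, hC⟩ := hf K hKs hK
  refine ⟨C, fun x hx y hy => ?_⟩
  rw [← hff' (hKs hx), ← hff' (hKs hy)]
  exact hC x hx y hy

theorem of_le (hf : LocallyHolderOn r f s) (h : r' ≤ r) : LocallyHolderOn r' f s := by
  intro K hKs hK
  obtain ⟨C, hC⟩ := hf K hKs hK
  obtain ⟨D, hD⟩ := isBounded_iff.1 hK.isBounded
  exact ⟨_, hC.of_le (D := D.toNNReal)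
    (fun x hx y hy => (edist_le_ofReal (dist_nonneg.trans (hD hx hy))).2 (hD hx hy)) h⟩

theorem comp {g : Y → Z} {t : Set Y} {rg : ℝ≥0} (hg : LocallyHolderOn rg g t)
    (hf : LocallyHolderOn r f s) (hr : 0 < r) (hst : MapsTo f s t) :
    LocallyHolderOn (rg * r) (g ∘ f) s := by
  intro K hKs hK
  obtain ⟨Cf, hCf⟩ := hf K hKs hK
  obtain ⟨Cg, hCg⟩ := hg (f '' K) (image_subset_iff.2 (hst.mono_left hKs))
    (hK.image_of_continuousOn (hCf.continuousOn hr))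
  exact ⟨_, hCg.comp hCf (mapsTo_image f K)⟩

theorem prodMk {g : X → Z} (hf : LocallyHolderOn r f s) (hg : LocallyHolderOn r g s) :
    LocallyHolderOn r (fun x => (f x, g x)) s := by
  intro K hKs hK
  obtain ⟨Cf, hCf⟩ := hf K hKs hK
  obtain ⟨Cg, hCg⟩ := hg K hKs hK
  refine ⟨max Cf Cg, fun x hx y hy => ?_⟩
  rw [Prod.edist_eq, ENNReal.coe_max, max_mul_of_nonneg _ _ zero_le]
  exact max_le_max (hCf x hx y hy) (hCg x hx y hy)

theorem pi {ι : Type*} [Fintype ι] {Y : ι → Type*} [∀ i, PseudoMetricSpace (Y i)]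
    {f : X → ∀ i, Y i} (hf : ∀ i, LocallyHolderOn r (fun x => f x i) s) :
    LocallyHolderOn r f s := by
  intro K hKs hK
  choose C hC using fun i => hf i K hKs hK
  refine ⟨∑ i, C i, fun x hx y hy => edist_pi_le_iff.2 fun i => (hC i x hx y hy).trans ?_⟩
  gcongr
  exact Finset.single_le_sum (fun j _ => zero_le) (Finset.mem_univ i)

end LocallyHolderOn

theorem HolderOnWith.norm_sub_le {E F : Type*} [SeminormedAddCommGroup E]
    [SeminormedAddCommGroup F] {C r : ℝ≥0} {f : E → F} {s : Set E} (hf : HolderOnWith C r f s)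
    {x y : E} (hx : x ∈ s) (hy : y ∈ s) : ‖f x - f y‖ ≤ C * ‖x - y‖ ^ (r : ℝ) := by
  simpa only [dist_eq_norm] using hf.dist_le hx hy

theorem LocallyLipschitzOn.locallyHolderOn {f : X → Y} {s : Set X}
    (hf : LocallyLipschitzOn s f) : LocallyHolderOn 1 f s := by
  intro K hKs hK
  obtain ⟨C, hC⟩ := (hf.mono hKs).exists_lipschitzOnWith_of_compact hK
  exact ⟨C, holderOnWith_one.2 hC⟩

theorem locallyHolderOn_id {r : ℝ≥0} (hr : r ≤ 1) (s : Set X) : LocallyHolderOn r id s :=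
  (LipschitzWith.id.locallyLipschitz.locallyLipschitzOn.locallyHolderOn).of_le hr

theorem LipschitzWith.locallyHolderOn {K : ℝ≥0} {f : X → Y} (hf : LipschitzWith K f) (s : Set X) :
    LocallyHolderOn 1 f s :=
  hf.locallyLipschitz.locallyLipschitzOn.locallyHolderOn

end LocallyHolder

theorem ContDiffOn.locallyHolderOn_one {E F : Type*} [NormedAddCommGroup E] [NormedSpace ℝ E]
    [NormedAddCommGroup F] [NormedSpace ℝ F] {f : E → F} {U : Set E} (hf : ContDiffOn ℝ 1 f U)
    (hU : IsOpen U) : LocallyHolderOn 1 f U :=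
  LocallyLipschitzOn.locallyHolderOn fun x hx => by
    obtain ⟨K, t, ht, hK⟩ := (hf.contDiffAt (hU.mem_nhds hx)).exists_lipschitzOnWith
    exact ⟨K, t, nhdsWithin_le_nhds ht, hK⟩

theorem hasDerivAt_abs_rpow_mul_self {q : ℝ} (hq : 0 ≤ q) (t : ℝ) :
    HasDerivAt (fun s => |s| ^ q * s) ((q + 1) * |t| ^ q) t := by
  refine hasDerivAt_of_hasDerivAt_of_ne' (g := fun s => (q + 1) * |s| ^ q) (x := 0)
    (fun s hs => ?_) (by fun_prop (disch := exact Or.inr hq))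
    (by fun_prop (disch := exact Or.inr hq)) t
  refine (((hasDerivAt_abs hs).rpow_const (Or.inl (abs_ne_zero.2 hs))).mul
    (hasDerivAt_id s)).congr_deriv ?_
  have hs' : |s| ^ (q - 1) * |s| = |s| ^ q := by
    rw [← rpow_add_one (abs_ne_zero.2 hs), sub_add_cancel]
  rw [id_eq, ← hs', ← sign_mul_self s]
  ring

theorem hasDerivAt_deriv_abs_rpow {p : ℝ} (hp : 2 ≤ p) (t : ℝ) :
    HasDerivAt (fun s => p * |s| ^ (p - 2) * s) (p * (p - 1) * |t| ^ (p - 2)) t := by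
  simpa only [mul_assoc, show p - 2 + 1 = p - 1 by ring] using
    (hasDerivAt_abs_rpow_mul_self (sub_nonneg.2 hp) t).const_mul p

theorem contDiff_abs_rpow {p : ℝ} (hp : 2 ≤ p) : ContDiff ℝ 2 fun t : ℝ => |t| ^ p := by
  have h1 : deriv (fun t : ℝ => |t| ^ p) = fun t => p * |t| ^ (p - 2) * t :=
    funext fun t => (hasDerivAt_abs_rpow t (by linarith)).deriv
  have h2 : deriv (fun t : ℝ => p * |t| ^ (p - 2) * t) = fun t => p * (p - 1) * |t| ^ (p - 2) :=
    funext fun t => (hasDerivAt_deriv_abs_rpow hp t).deriv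
  rw [show (2 : WithTop ℕ∞) = 1 + 1 from rfl, contDiff_succ_iff_deriv, h1, contDiff_one_iff_deriv,
    h2]
  refine ⟨fun t => (hasDerivAt_abs_rpow t (by linarith)).differentiableAt, by simp,
    fun t => (hasDerivAt_deriv_abs_rpow hp t).differentiableAt, ?_⟩
  exact continuous_const.mul (continuous_abs.rpow_const fun _ => Or.inr (sub_nonneg.2 hp))

theorem abs_rpow_sub_rpow_le {a b q : ℝ} (ha : 0 ≤ a) (hb : 0 ≤ b) (hq0 : 0 ≤ q) (hq1 : q ≤ 1) :
    |a ^ q - b ^ q| ≤ |a - b| ^ q := by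
  wlog hba : b ≤ a generalizing a b
  · rw [abs_sub_comm, abs_sub_comm a]
    exact this hb ha (le_of_not_ge hba)
  have hsub : a ^ q ≤ (a - b) ^ q + b ^ q := by
    simpa using rpow_add_le_add_rpow (sub_nonneg.2 hba) hb hq0 hq1
  rw [abs_of_nonneg (sub_nonneg.2 (rpow_le_rpow hb hba hq0)), abs_of_nonneg (sub_nonneg.2 hba)]
  linarith

theorem holderWith_abs_rpow {q : ℝ≥0} (hq : q ≤ 1) : HolderWith 1 q fun t : ℝ => |t| ^ (q : ℝ) := by
  intro a b
  rw [edist_dist, edist_dist, ENNReal.coe_one, one_mul,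
    ENNReal.ofReal_rpow_of_nonneg dist_nonneg q.coe_nonneg]
  refine ENNReal.ofReal_le_ofReal ?_
  rw [dist_eq_norm, dist_eq_norm, Real.norm_eq_abs, Real.norm_eq_abs]
  exact (abs_rpow_sub_rpow_le (abs_nonneg a) (abs_nonneg b) q.coe_nonneg hq).trans
    (rpow_le_rpow (abs_nonneg _) (abs_abs_sub_abs_le_abs_sub a b) q.coe_nonneg)

theorem exists_locallyHolderOn_abs_rpow {q : ℝ} (hq : 0 ≤ q) :
    ∃ δ : ℝ≥0, 0 < δ ∧ δ ≤ 1 ∧ LocallyHolderOn δ (fun t : ℝ => |t| ^ q) univ := by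
  rcases hq.eq_or_lt with rfl | hq0
  · refine ⟨1, one_pos, le_rfl, ?_⟩
    simpa only [rpow_zero] using (LipschitzWith.const (1 : ℝ)).locallyHolderOn univ
  rcases le_or_gt q 1 with hq1 | hq1
  · lift q to ℝ≥0 using hq
    exact ⟨q, hq0, hq1, fun K _ _ => ⟨1, (holderWith_abs_rpow hq1).holderOnWith K⟩⟩
  · refine ⟨1, one_pos, le_rfl, ?_⟩
    simpa only [Real.norm_eq_abs] using
      (contDiff_norm_rpow (E := ℝ) hq1).locallyLipschitz.locallyLipschitzOn.locallyHolderOn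

section SecondDerivativeComp

variable {E : Type*} [NormedAddCommGroup E] [NormedSpace ℝ E] {U : Set E} {W : Set ℝ}
  {h : ℝ → ℝ} {g : E → ℝ} {x : E}

theorem fderiv_fderiv_comp (hU : IsOpen U) (hW : IsOpen W) (hh : ContDiffOn ℝ 2 h W)
    (hg : ContDiffOn ℝ 2 g U) (hgW : MapsTo g U W) (hx : x ∈ U) :
    fderiv ℝ (fderiv ℝ (h ∘ g)) x = deriv h (g x) • fderiv ℝ (fderiv ℝ g) x +
      (deriv (deriv h) (g x) • fderiv ℝ g x).smulRight (fderiv ℝ g x) := by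
  have hg' {y} (hy : y ∈ U) : HasFDerivAt g (fderiv ℝ g y) y :=
    ((hg.contDiffAt (hU.mem_nhds hy)).differentiableAt (by norm_num)).hasFDerivAt
  have hh' {y} (hy : y ∈ U) : HasDerivAt h (deriv h (g y)) (g y) :=
    ((hh.contDiffAt (hW.mem_nhds (hgW hy))).differentiableAt (by norm_num)).hasDerivAt
  have hh'' : HasDerivAt (deriv h) (deriv (deriv h) (g x)) (g x) :=
    (((hh.deriv_of_isOpen hW (m := 1) (by norm_num)).contDiffAt
      (hW.mem_nhds (hgW hx))).differentiableAt (by norm_num)).hasDerivAt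
  have hg'' : HasFDerivAt (fderiv ℝ g) (fderiv ℝ (fderiv ℝ g) x) x :=
    (((hg.fderiv_of_isOpen hU (m := 1) (by norm_num)).contDiffAt
      (hU.mem_nhds hx)).differentiableAt (by norm_num)).hasFDerivAt
  have hD : fderiv ℝ (h ∘ g) =ᶠ[nhds x] fun y => deriv h (g y) • fderiv ℝ g y :=
    Filter.eventually_of_mem (hU.mem_nhds hx) fun y hy =>
      ((hh' hy).comp_hasFDerivAt y (hg' hy)).fderiv
  rw [hD.fderiv_eq]
  exact ((hh''.comp_hasFDerivAt x (hg' hx)).smul hg'').fderiv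

theorem LocallyHolderOn.fderiv_fderiv_comp {δ : ℝ≥0} (hδ0 : 0 < δ) (hδ1 : δ ≤ 1)
    (hU : IsOpen U) (hW : IsOpen W) (hh : ContDiffOn ℝ 3 h W) (hg : ContDiffOn ℝ 2 g U)
    (hgW : MapsTo g U W) (hD2 : LocallyHolderOn δ (fderiv ℝ (fderiv ℝ g)) U) :
    LocallyHolderOn δ (fderiv ℝ (fderiv ℝ (h ∘ g))) U := by
  have hg1 : ContDiffOn ℝ 1 g U := hg.of_le (by norm_num)
  have hDg : ContDiffOn ℝ 1 (fderiv ℝ g) U := hg.fderiv_of_isOpen hU (by norm_num)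
  have hh' : ContDiffOn ℝ 1 (fun x => deriv h (g x)) U :=
    (hh.deriv_of_isOpen hW (by norm_num)).comp hg1 hgW
  have hh'' : ContDiffOn ℝ 1 (fun x => deriv (deriv h) (g x)) U :=
    ((hh.deriv_of_isOpen hW (m := 2) (by norm_num)).deriv_of_isOpen hW (by norm_num)).comp hg1 hgW
  have hΦ : ContDiffOn ℝ 1 (fun z : E × (E →L[ℝ] E →L[ℝ] ℝ) => deriv h (g z.1) • z.2 +
      (deriv (deriv h) (g z.1) • fderiv ℝ g z.1).smulRight (fderiv ℝ g z.1)) (U ×ˢ univ) := by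
    have hfst : MapsTo Prod.fst (U ×ˢ (univ : Set (E →L[ℝ] E →L[ℝ] ℝ))) U := fun z hz => hz.1
    -- `c • H = H ∘L (c • id)`: instance search does not find `IsBoundedSMul ℝ (E →L[ℝ] E →L[ℝ] ℝ)`
    have hsmul : ContDiffOn ℝ 1 (fun z : E × (E →L[ℝ] E →L[ℝ] ℝ) => deriv h (g z.1) • z.2)
        (U ×ˢ univ) :=
      (contDiffOn_snd.clm_comp ((hh'.comp contDiffOn_fst hfst).smul
        (contDiffOn_const (c := ContinuousLinearMap.id ℝ E)))).congr fun z _ => by ext v w; simp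
    exact hsmul.add (((hh''.smul hDg).smulRight hDg).comp contDiffOn_fst hfst)
  have hG : LocallyHolderOn δ (fun x => (x, fderiv ℝ (fderiv ℝ g) x)) U :=
    (locallyHolderOn_id hδ1 U).prodMk hD2
  simpa only [one_mul] using ((hΦ.locallyHolderOn_one (hU.prod isOpen_univ)).comp hG hδ0
    fun x hx => ⟨hx, trivial⟩).congr fun x hx =>
      (_root_.fderiv_fderiv_comp hU hW (hh.of_le (by norm_num)) hg hgW hx).symm

end SecondDerivativeComp

theorem norm_sub_iteratedFDeriv_two {𝕜 E F : Type*} [NontriviallyNormedField 𝕜]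
    [NormedAddCommGroup E] [NormedSpace 𝕜 E] [NormedAddCommGroup F] [NormedSpace 𝕜 F]
    (f : E → F) (x y : E) :
    ‖iteratedFDeriv 𝕜 2 f x - iteratedFDeriv 𝕜 2 f y‖ =
      ‖fderiv 𝕜 (fderiv 𝕜 f) x - fderiv 𝕜 (fderiv 𝕜 f) y‖ := by
  simp only [iteratedFDeriv_succ_eq_comp_right, iteratedFDeriv_zero_eq_comp, Function.comp_apply,
    ← LinearIsometryEquiv.map_sub, LinearIsometryEquiv.norm_map]

section SumAbsRpow

variable {ι : Type*} [Fintype ι] {p : ℝ}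

def sumAbsRpow (p : ℝ) (x : EuclideanSpace ℝ ι) : ℝ := ∑ i, |x i| ^ p

theorem hasFDerivAt_sumAbsRpow (hp : 1 < p) (x : EuclideanSpace ℝ ι) :
    HasFDerivAt (sumAbsRpow p)
      (∑ i, (p * |x i| ^ (p - 2) * x i) • EuclideanSpace.proj (𝕜 := ℝ) i) x :=
  HasFDerivAt.fun_sum fun i _ =>
    (hasDerivAt_abs_rpow (x i) hp).comp_hasFDerivAt (h₂ := fun t => |t| ^ p) x
      (EuclideanSpace.proj (𝕜 := ℝ) i).hasFDerivAt

theorem fderiv_fderiv_sumAbsRpow (hp : 2 ≤ p) (x : EuclideanSpace ℝ ι) :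
    fderiv ℝ (fderiv ℝ (sumAbsRpow p)) x =
      ∑ i, ((p * (p - 1) * |x i| ^ (p - 2)) • EuclideanSpace.proj (𝕜 := ℝ) i).smulRight
        (EuclideanSpace.proj (𝕜 := ℝ) i) := by
  have hD : fderiv ℝ (sumAbsRpow p) =
      fun y : EuclideanSpace ℝ ι =>
        ∑ i, (p * |y i| ^ (p - 2) * y i) • EuclideanSpace.proj (𝕜 := ℝ) i :=
    funext fun y => (hasFDerivAt_sumAbsRpow (by linarith) y).fderiv
  rw [hD]
  refine (HasFDerivAt.fun_sum fun i _ => ?_).fderiv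
  exact ((hasDerivAt_deriv_abs_rpow hp (x i)).comp_hasFDerivAt
    (h₂ := fun t => p * |t| ^ (p - 2) * t) x
    (EuclideanSpace.proj (𝕜 := ℝ) i).hasFDerivAt).smul_const (EuclideanSpace.proj (𝕜 := ℝ) i)

theorem contDiff_sumAbsRpow (hp : 2 ≤ p) : ContDiff ℝ 2 (sumAbsRpow (ι := ι) p) :=
  ContDiff.sum fun i _ => (contDiff_abs_rpow hp).comp (EuclideanSpace.proj (𝕜 := ℝ) i).contDiff

theorem sumAbsRpow_pos {x : EuclideanSpace ℝ ι} (hx : x ≠ 0) : 0 < sumAbsRpow p x := by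
  obtain ⟨i, hi⟩ : ∃ i, x i ≠ 0 := by
    by_contra! h
    exact hx (by ext i; simp [h i])
  exact Finset.sum_pos' (fun j _ => by positivity)
    ⟨i, Finset.mem_univ i, rpow_pos_of_pos (abs_pos.2 hi) p⟩

theorem locallyHolderOn_fderiv_fderiv_sumAbsRpow (hp : 2 ≤ p) {δ : ℝ≥0} (hδ : 0 < δ)
    (hw : LocallyHolderOn δ (fun t : ℝ => |t| ^ (p - 2)) univ) :
    LocallyHolderOn δ (fderiv ℝ (fderiv ℝ (sumAbsRpow p))) (univ : Set (EuclideanSpace ℝ ι)) := by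
  have hΨ : ContDiff ℝ 1 fun a : ι → ℝ => ∑ i, ((p * (p - 1) * a i) •
      EuclideanSpace.proj (𝕜 := ℝ) i).smulRight (EuclideanSpace.proj (𝕜 := ℝ) i) := by
    fun_prop
  have hω : LocallyHolderOn δ (fun x : EuclideanSpace ℝ ι => fun i => |x i| ^ (p - 2)) univ :=
    LocallyHolderOn.pi fun i => mul_one δ ▸ hw.comp
      ((EuclideanSpace.proj (𝕜 := ℝ) i).lipschitz.locallyHolderOn univ) one_pos (mapsTo_univ _ _)
  simpa only [one_mul] using ((hΨ.contDiffOn.locallyHolderOn_one isOpen_univ).comp hω hδ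
    (mapsTo_univ _ _)).congr fun x _ => (fderiv_fderiv_sumAbsRpow hp x).symm

end SumAbsRpow

theorem pNorm_eq_comp (p : ℝ) : pNorm p = (fun s => s ^ (1 / p)) ∘ sumAbsRpow (ι := Fin 2) p := by
  funext x
  simp [pNorm, sumAbsRpow, Fin.sum_univ_two]

theorem contDiffOn_rpow_const_Ioi (a : ℝ) {n : WithTop ℕ∞} :
    ContDiffOn ℝ n (fun s : ℝ => s ^ a) (Ioi 0) :=
  fun _ hs => (contDiffAt_rpow_const_of_ne (ne_of_gt hs)).contDiffWithinAt

/-- for `2 ≤ p < ∞` the `p`-norm, restricted to `ℝ² \ {0}`, is of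
class `C^{2,δ}` for some `δ ∈ (0,1]`. -/
theorem pNorm_C2delta_of_two_le
    (p : ℝ) (hp : 2 ≤ p) :
    ∃ δ : ℝ, 0 < δ ∧ δ ≤ 1 ∧
      ContDiffOn ℝ 2 (pNorm p) ({0}ᶜ : Set (EuclideanSpace ℝ (Fin 2))) ∧
      ∀ K : Set (EuclideanSpace ℝ (Fin 2)), K ⊆ {0}ᶜ → IsCompact K →
        ∃ M : ℝ, ∀ x ∈ K, ∀ y ∈ K,
          ‖iteratedFDerivWithin ℝ 2 (pNorm p)
              ({0}ᶜ : Set (EuclideanSpace ℝ (Fin 2))) x -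
            iteratedFDerivWithin ℝ 2 (pNorm p)
              ({0}ᶜ : Set (EuclideanSpace ℝ (Fin 2))) y‖ ≤ M * ‖x - y‖ ^ δ := by
  obtain ⟨δ, hδ0, hδ1, hw⟩ := exists_locallyHolderOn_abs_rpow (sub_nonneg.2 hp)
  have hU : IsOpen ({0}ᶜ : Set (EuclideanSpace ℝ (Fin 2))) := isOpen_compl_singleton
  have hg : ContDiffOn ℝ 2 (sumAbsRpow (ι := Fin 2) p) {0}ᶜ := (contDiff_sumAbsRpow hp).contDiffOn
  have hgpos : MapsTo (sumAbsRpow (ι := Fin 2) p) {0}ᶜ (Ioi 0) := fun _ hx => sumAbsRpow_pos hx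
  have hh : ContDiffOn ℝ 3 (fun s : ℝ => s ^ (1 / p)) (Ioi 0) := contDiffOn_rpow_const_Ioi _
  have hD2 : LocallyHolderOn δ (fderiv ℝ (fderiv ℝ (pNorm p))) {0}ᶜ := by
    rw [pNorm_eq_comp]
    exact ((locallyHolderOn_fderiv_fderiv_sumAbsRpow (ι := Fin 2) hp hδ0 hw).mono
      (subset_univ _)).fderiv_fderiv_comp hδ0 hδ1 hU isOpen_Ioi hh hg hgpos
  refine ⟨δ, hδ0, hδ1, ?_, fun K hKU hK => ?_⟩
  · rw [pNorm_eq_comp]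
    exact (hh.of_le (by norm_num)).comp hg hgpos
  obtain ⟨C, hC⟩ := hD2 K hKU hK
  refine ⟨C, fun x hx y hy => ?_⟩
  rw [iteratedFDerivWithin_of_isOpen 2 hU (hKU hx), iteratedFDerivWithin_of_isOpen 2 hU (hKU hy),
    norm_sub_iteratedFDeriv_two]
  -- The metric that instance search puts on `E →L[ℝ] E →L[ℝ] ℝ` is not syntactically the one
  -- induced by its norm, so the codomain is given explicitly.
  exact HolderOnWith.norm_sub_le
    (F := EuclideanSpace ℝ (Fin 2) →L[ℝ] EuclideanSpace ℝ (Fin 2) →L[ℝ] ℝ) hC hx hy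
end
end
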